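/- arXiv:2509.08850 — 2 statements merged into one kernel-verified Lean document; each statement's English description precedes it below -/
import Mathlib

section
/- Let α, β, γ > 0, μ, r, y ∈ ℝ, θ̄(y) = (αy + γμ)/(α + γ) and V = 1/β + 1/(α + γ). Then for every x ∈ ℝ: ∫_ℝ (r + θ) · (1 − Φ(x; θ, 1/β)) · φ(θ; θ̄(y), 1/(α + γ)) dθ = (r + θ̄(y)) · (1 − Φ(x; θ̄(y), V)) + (1/(α + γ)) · φ(x; θ̄(y), V). (The sender's interim expected payoff Π(x, y) = ∫ (r + θ)(1 − F(x|θ)) dF(θ|y) admits this closed form.) -/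
open MeasureTheory Real Set ProbabilityTheory

/-- Gaussian density of `N(m, v)` evaluated at `t`. -/
noncomputable def phi (t m v : ℝ) : ℝ :=
  (2 * Real.pi * v) ^ (-(1:ℝ)/2) * Real.exp (-(t - m)^2 / (2*v))

/-- Gaussian cumulative distribution function of `N(m, v)` evaluated at `t`. -/
noncomputable def Phi (t m v : ℝ) : ℝ := ∫ s in Set.Iic t, phi s m v

lemma phi_eq_gauss (m : ℝ) {v : ℝ} (hv : 0 < v) (t : ℝ) :
    phi t m v = gaussianPDFReal m ⟨v, hv.le⟩ t := by
  have h2 : (0:ℝ) ≤ 2 * Real.pi * v := by positivity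
  rw [phi]; unfold gaussianPDFReal
  congr 1
  show (2 * Real.pi * v) ^ (-(1:ℝ)/2) = (Real.sqrt (2 * Real.pi * v))⁻¹
  rw [Real.sqrt_eq_rpow, ← Real.rpow_neg h2]
  norm_num

lemma phi_nonneg (t m : ℝ) {v : ℝ} (hv : 0 < v) : 0 ≤ phi t m v := by
  rw [phi_eq_gauss m hv]; exact gaussianPDFReal_nonneg _ _ _

lemma integrable_phi (m : ℝ) {v : ℝ} (hv : 0 < v) : Integrable (fun t => phi t m v) := by
  simp only [phi_eq_gauss m hv]
  exact integrable_gaussianPDFReal _ _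

lemma integral_phi (m : ℝ) {v : ℝ} (hv : 0 < v) : ∫ t, phi t m v = 1 := by
  simp only [phi_eq_gauss m hv]
  exact integral_gaussianPDFReal_eq_one m (ne_of_gt (show (0:NNReal) < ⟨v, hv.le⟩ from hv))

lemma integrable_id_mul_exp {b : ℝ} (hb : 0 < b) :
    Integrable (fun u : ℝ => u * Real.exp (-b * u ^ 2)) := by
  have := integrable_rpow_mul_exp_neg_mul_sq hb (s := 1) (by norm_num)
  simpa [Real.rpow_one] using this

lemma integrable_id_mul_phi (m : ℝ) {v : ℝ} (hv : 0 < v) :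
    Integrable (fun t => t * phi t m v) := by
  have hb : (0:ℝ) < 1 / (2 * v) := by positivity
  have h1 : Integrable (fun u : ℝ => (u + m) * Real.exp (-(1/(2*v)) * u ^ 2)) :=
    (integrable_id_mul_exp hb).add ((integrable_exp_neg_mul_sq hb).const_mul m)
      |>.congr (by filter_upwards with u; simp only [Pi.add_apply]; ring)
  have h2 := h1.comp_sub_right m
  have h3 := h2.const_mul ((2 * Real.pi * v) ^ (-(1:ℝ)/2))
  refine h3.congr (by filter_upwards with t; rw [phi]; ring_nf)

lemma integral_id_mul_phi (m : ℝ) {v : ℝ} (hv : 0 < v) :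
    ∫ t, t * phi t m v = m := by
  have key : ∫ t, (t - m) * phi t m v = 0 := by
    have hshift : ∫ t, (t - m) * phi t m v = ∫ u, u * phi u 0 v := by
      rw [← integral_add_right_eq_self (fun t => (t - m) * phi t m v) m]
      congr 1; ext u
      have : u + m - m = u := by ring
      rw [this, phi, phi]; ring_nf
    rw [hshift]
    have hneg : ∫ u, u * phi u 0 v = ∫ u, (-u) * phi (-u) 0 v :=
      (integral_neg_eq_self (fun u => u * phi u 0 v) volume).symm
    have : ∫ u, (-u) * phi (-u) 0 v = - ∫ u, u * phi u 0 v := by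
      rw [← integral_neg]; congr 1; ext u; rw [phi, phi]; ring_nf
    linarith [hneg, this]
  have hsplit : Integrable (fun t => (t - m) * phi t m v) :=
    (integrable_id_mul_phi m hv).sub ((integrable_phi m hv).const_mul m) |>.congr
      (by filter_upwards with t; simp only [Pi.sub_apply]; ring)
  have := integral_sub (integrable_id_mul_phi m hv) ((integrable_phi m hv).const_mul m)
  have h2 : ∫ t, (t * phi t m v - m * phi t m v) = 0 := by
    rw [← key]; congr 1; ext t; ring
  rw [this] at h2
  rw [integral_const_mul, integral_phi m hv] at h2
  linarith

lemma one_sub_Phi (x m : ℝ) {v : ℝ} (hv : 0 < v) :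
    1 - Phi x m v = ∫ t in Set.Ioi x, phi t m v := by
  have h := intervalIntegral.integral_Iic_add_Ioi (b := x) (f := fun t => phi t m v)
    (integrable_phi m hv).integrableOn (integrable_phi m hv).integrableOn
  rw [integral_phi m hv] at h
  rw [Phi]; linarith

lemma Phi_nonneg (x m : ℝ) {v : ℝ} (hv : 0 < v) : 0 ≤ Phi x m v :=
  setIntegral_nonneg measurableSet_Iic (fun t _ => phi_nonneg t m hv)

lemma one_sub_Phi_nonneg (x m : ℝ) {v : ℝ} (hv : 0 < v) : 0 ≤ 1 - Phi x m v := by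
  rw [one_sub_Phi x m hv]
  exact setIntegral_nonneg measurableSet_Ioi (fun t _ => phi_nonneg t m hv)

lemma Phi_le_one (x m : ℝ) {v : ℝ} (hv : 0 < v) : Phi x m v ≤ 1 := by
  linarith [one_sub_Phi_nonneg x m hv]

lemma hasDerivAt_phi (t m : ℝ) {v : ℝ} (hv : 0 < v) :
    HasDerivAt (fun s => -v * phi s m v) ((t - m) * phi t m v) t := by
  have h1 : HasDerivAt (fun s : ℝ => -(s - m)^2 / (2*v)) (-(t - m) / v) t := by
    have : HasDerivAt (fun s : ℝ => s - m) 1 t := (hasDerivAt_id t).sub_const m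
    have h2 := (this.pow 2).neg.div_const (2*v)
    refine h2.congr_deriv ?_
    field_simp; ring
  have h3 := (h1.exp.const_mul ((2 * Real.pi * v) ^ (-(1:ℝ)/2))).const_mul (-v)
  refine h3.congr_deriv ?_
  rw [phi]; field_simp

lemma tendsto_phi_atTop (m : ℝ) {v : ℝ} (hv : 0 < v) :
    Filter.Tendsto (fun t => -v * phi t m v) Filter.atTop (nhds 0) := by
  have h1 : Filter.Tendsto (fun t : ℝ => -(t - m)^2 / (2*v)) Filter.atTop Filter.atBot := by
    apply Filter.Tendsto.atBot_div_const (by positivity)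
    have hsq : Filter.Tendsto (fun t : ℝ => (t - m)^2) Filter.atTop Filter.atTop := by
      refine (Filter.tendsto_pow_atTop (two_ne_zero)).comp ?_
      simpa [sub_eq_add_neg] using Filter.tendsto_atTop_add_const_right Filter.atTop (-m) Filter.tendsto_id
    exact Filter.tendsto_neg_atBot_iff.mpr hsq
  have h2 := Real.tendsto_exp_atBot.comp h1
  have h3 : Filter.Tendsto (fun t => phi t m v) Filter.atTop (nhds 0) := by
    have := h2.const_mul ((2 * Real.pi * v) ^ (-(1:ℝ)/2))
    simpa [phi, Function.comp] using this
  simpa using h3.const_mul (-v)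

lemma integral_Ioi_sub_mul_phi (x m : ℝ) {v : ℝ} (hv : 0 < v) :
    ∫ t in Set.Ioi x, (t - m) * phi t m v = v * phi x m v := by
  have hint : IntegrableOn (fun t => (t - m) * phi t m v) (Set.Ioi x) := by
    refine Integrable.integrableOn ?_
    exact ((integrable_id_mul_phi m hv).sub ((integrable_phi m hv).const_mul m)).congr
      (by filter_upwards with t; simp only [Pi.sub_apply]; ring)
  have := integral_Ioi_of_hasDerivAt_of_tendsto
    (f := fun s => -v * phi s m v) (f' := fun t => (t - m) * phi t m v) (a := x)
    ((hasDerivAt_phi x m hv).continuousAt.continuousWithinAt)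
    (fun t _ => hasDerivAt_phi t m hv) hint (tendsto_phi_atTop m hv)
  rw [this]; ring

lemma phi_symm (a b : ℝ) (v : ℝ) : phi a b v = phi b a v := by
  rw [phi, phi]; ring_nf

lemma phi_mul_phi (θ a m : ℝ) {v w : ℝ} (hv : 0 < v) (hw : 0 < w) :
    phi θ a w * phi θ m v
      = phi a m (w + v) * phi θ ((w*m + v*a)/(w+v)) (v*w/(w+v)) := by
  have hwv : (0:ℝ) < w + v := by linarith
  have e1 : (0:ℝ) ≤ 2 * Real.pi * w := by positivity
  have e2 : (0:ℝ) ≤ 2 * Real.pi * v := by positivity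
  have e3 : (0:ℝ) ≤ 2 * Real.pi * (w + v) := by positivity
  have e4 : (0:ℝ) ≤ 2 * Real.pi * (v*w/(w+v)) := by positivity
  have hpre : (2*Real.pi*w) ^ (-(1:ℝ)/2) * (2*Real.pi*v) ^ (-(1:ℝ)/2)
      = (2*Real.pi*(w+v)) ^ (-(1:ℝ)/2) * (2*Real.pi*(v*w/(w+v))) ^ (-(1:ℝ)/2) := by
    rw [← Real.mul_rpow e1 e2, ← Real.mul_rpow e3 e4]
    congr 1
    field_simp
  have hexp : Real.exp (-(θ-a)^2/(2*w)) * Real.exp (-(θ-m)^2/(2*v))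
      = Real.exp (-(a-m)^2/(2*(w+v)))
        * Real.exp (-(θ - (w*m+v*a)/(w+v))^2/(2*(v*w/(w+v)))) := by
    rw [← Real.exp_add, ← Real.exp_add]
    congr 1
    field_simp; ring
  rw [phi, phi, phi, phi]
  calc (2*Real.pi*w) ^ (-(1:ℝ)/2) * Real.exp (-(θ-a)^2/(2*w))
        * ((2*Real.pi*v) ^ (-(1:ℝ)/2) * Real.exp (-(θ-m)^2/(2*v)))
      = ((2*Real.pi*w) ^ (-(1:ℝ)/2) * (2*Real.pi*v) ^ (-(1:ℝ)/2))
        * (Real.exp (-(θ-a)^2/(2*w)) * Real.exp (-(θ-m)^2/(2*v))) := by ring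
    _ = ((2*Real.pi*(w+v)) ^ (-(1:ℝ)/2) * (2*Real.pi*(v*w/(w+v))) ^ (-(1:ℝ)/2))
        * (Real.exp (-(a-m)^2/(2*(w+v)))
          * Real.exp (-(θ - (w*m+v*a)/(w+v))^2/(2*(v*w/(w+v))))) := by rw [hpre, hexp]
    _ = _ := by ring

lemma continuous_phi2 (m v w : ℝ) (r : ℝ) :
    Continuous (fun p : ℝ × ℝ => (r + p.1) * phi p.1 m v * phi p.2 p.1 w) := by
  unfold phi
  continuity

lemma key_closed_form (m r x : ℝ) {v w : ℝ} (hv : 0 < v) (hw : 0 < w) :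
    ∫ θ, (r + θ) * (1 - Phi x θ w) * phi θ m v
      = (r + m) * (1 - Phi x m (w + v)) + v * phi x m (w + v) := by
  have hVpos : 0 < w + v := by linarith
  set V := w + v with hV
  set F : ℝ → ℝ → ℝ := fun θ s => (r + θ) * phi θ m v * phi s θ w with hF
  have hcontF : Continuous (fun p : ℝ × ℝ => F p.1 p.2) := continuous_phi2 m v w r
  -- step 1: rewrite integrand as inner integral
  have step1 : ∀ θ, (r + θ) * (1 - Phi x θ w) * phi θ m v = ∫ s in Set.Ioi x, F θ s := by
    intro θ
    have h2 : (∫ s in Set.Ioi x, F θ s)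
        = ((r + θ) * phi θ m v) * ∫ s in Set.Ioi x, phi s θ w :=
      integral_const_mul _ _
    rw [h2, ← one_sub_Phi x θ hw]; ring
  -- integrability on the product
  have hbound : Integrable (fun θ => (r + θ) * phi θ m v) :=
    (((integrable_phi m hv).const_mul r).add (integrable_id_mul_phi m hv)).congr
      (by filter_upwards with θ; simp only [Pi.add_apply]; ring)
  have habs : Integrable (fun θ => |r + θ| * phi θ m v) :=
    hbound.abs.congr (by
      filter_upwards with θ
      rw [abs_mul, abs_of_nonneg (phi_nonneg θ m hv)])
  have hFm : AEStronglyMeasurable (fun p : ℝ × ℝ => F p.1 p.2)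
      (volume.prod (volume.restrict (Set.Ioi x))) := hcontF.aestronglyMeasurable
  have hnormF : ∀ θ, (∫ s in Set.Ioi x, ‖F θ s‖)
      = |r + θ| * phi θ m v * (1 - Phi x θ w) := by
    intro θ
    have h1 : ∀ s, ‖F θ s‖ = (|r + θ| * phi θ m v) * phi s θ w := by
      intro s
      simp only [hF, Real.norm_eq_abs, abs_mul, abs_of_nonneg (phi_nonneg θ m hv),
        abs_of_nonneg (phi_nonneg s θ hw)]
    simp only [h1]
    rw [integral_const_mul, ← one_sub_Phi x θ hw]
  have hprod : Integrable (fun p : ℝ × ℝ => F p.1 p.2)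
      (volume.prod (volume.restrict (Set.Ioi x))) := by
    rw [integrable_prod_iff hFm]
    constructor
    · refine Filter.Eventually.of_forall (fun θ => ?_)
      have : Integrable (fun s => ((r + θ) * phi θ m v) * phi s θ w)
          (volume.restrict (Set.Ioi x)) := ((integrable_phi θ hw).const_mul _).integrableOn
      exact this.congr (by filter_upwards with s; simp only [hF])
    · refine habs.mono' (hFm.norm.integral_prod_right') ?_
      filter_upwards with θ
      have h0 : 0 ≤ |r + θ| * phi θ m v := mul_nonneg (abs_nonneg _) (phi_nonneg θ m hv)
      rw [Real.norm_eq_abs, hnormF θ,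
        abs_of_nonneg (mul_nonneg h0 (one_sub_Phi_nonneg x θ hw))]
      have h1 : 1 - Phi x θ w ≤ 1 := by linarith [Phi_nonneg x θ hw]
      calc |r + θ| * phi θ m v * (1 - Phi x θ w) ≤ |r + θ| * phi θ m v * 1 :=
            mul_le_mul_of_nonneg_left h1 h0
        _ = |r + θ| * phi θ m v := by ring
  -- Fubini swap
  have hswap : (∫ θ, ∫ s in Set.Ioi x, F θ s) = ∫ s in Set.Ioi x, ∫ θ, F θ s :=
    integral_integral_swap hprod
  have hu : 0 < v * w / V := by positivity
  -- inner integral after swap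
  have hinner : ∀ s, (∫ θ, F θ s) = (r + m) * phi s m V + (v/V) * ((s - m) * phi s m V) := by
    intro s
    have hrw : ∀ θ, F θ s = phi s m V * ((r + θ) * phi θ ((w*m + v*s)/V) (v*w/V)) := by
      intro θ
      simp only [hF]
      rw [show (r + θ) * phi θ m v * phi s θ w = phi θ s w * phi θ m v * (r + θ) from by
        rw [phi_symm s θ w]; ring]
      rw [phi_mul_phi θ s m hv hw, ← hV]
      ring
    have hint : (∫ θ, (r + θ) * phi θ ((w*m + v*s)/V) (v*w/V)) = r + (w*m + v*s)/V := by
      have hsplit : Integrable (fun θ => r * phi θ ((w*m + v*s)/V) (v*w/V)) :=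
        (integrable_phi _ hu).const_mul r
      have hsplit2 : Integrable (fun θ => θ * phi θ ((w*m + v*s)/V) (v*w/V)) :=
        integrable_id_mul_phi _ hu
      have : (∫ θ, (r + θ) * phi θ ((w*m + v*s)/V) (v*w/V))
          = (∫ θ, r * phi θ ((w*m + v*s)/V) (v*w/V))
            + ∫ θ, θ * phi θ ((w*m + v*s)/V) (v*w/V) := by
        rw [← integral_add hsplit hsplit2]
        congr 1; ext θ; ring
      rw [this, integral_const_mul, integral_phi _ hu, integral_id_mul_phi _ hu]
      ring
    calc (∫ θ, F θ s) = ∫ θ, phi s m V * ((r + θ) * phi θ ((w*m + v*s)/V) (v*w/V)) := by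
          simp only [hrw]
      _ = phi s m V * (r + (w*m + v*s)/V) := by rw [integral_const_mul, hint]
      _ = (r + m) * phi s m V + (v/V) * ((s - m) * phi s m V) := by
          rw [hV]; field_simp; ring
  -- outer integral
  have hint1 : IntegrableOn (fun s => phi s m V) (Set.Ioi x) :=
    (integrable_phi m hVpos).integrableOn
  have hint2 : IntegrableOn (fun s => (s - m) * phi s m V) (Set.Ioi x) :=
    (((integrable_id_mul_phi m hVpos).sub ((integrable_phi m hVpos).const_mul m)).congr
      (by filter_upwards with t; simp only [Pi.sub_apply]; ring)).integrableOn
  calc (∫ θ, (r + θ) * (1 - Phi x θ w) * phi θ m v)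
      = ∫ θ, ∫ s in Set.Ioi x, F θ s := by simp only [step1]
    _ = ∫ s in Set.Ioi x, ∫ θ, F θ s := hswap
    _ = ∫ s in Set.Ioi x, ((r + m) * phi s m V + (v/V) * ((s - m) * phi s m V)) := by
        simp only [hinner]
    _ = (r + m) * (∫ s in Set.Ioi x, phi s m V)
        + (v/V) * ∫ s in Set.Ioi x, (s - m) * phi s m V := by
        rw [integral_add ((hint1.const_mul _)) (hint2.const_mul _), integral_const_mul,
          integral_const_mul]
    _ = (r + m) * (1 - Phi x m V) + (v/V) * (V * phi x m V) := by
        rw [← one_sub_Phi x m hVpos, integral_Ioi_sub_mul_phi x m hVpos]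
    _ = (r + m) * (1 - Phi x m V) + v * phi x m V := by
        field_simp

/-- The sender's interim expected payoff `Π(x, y) = ∫ (r + θ)(1 − F(x|θ)) dF(θ|y)`
admits the closed form
`(r + θ̄(y))(1 − Φ(x; θ̄(y), V)) + (1/(α + γ)) φ(x; θ̄(y), V)`. -/
theorem sender_interim_payoff_closed_form (α β γ : ℝ) (hα : 0 < α) (hβ : 0 < β) (hγ : 0 < γ)
    (μ r y : ℝ) (x : ℝ) :
    (∫ θ : ℝ, (r + θ) * (1 - Phi x θ (1/β)) * phi θ ((α*y + γ*μ)/(α + γ)) (1/(α + γ)))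
      = (r + (α*y + γ*μ)/(α + γ)) * (1 - Phi x ((α*y + γ*μ)/(α + γ)) (1/β + 1/(α + γ)))
        + (1/(α + γ)) * phi x ((α*y + γ*μ)/(α + γ)) (1/β + 1/(α + γ)) := by
  exact key_closed_form ((α*y + γ*μ)/(α + γ)) r x (by positivity) (by positivity)
end

section
/- Let α, β, γ > 0 and μ, y ∈ ℝ, and suppose r = 0. Then the receivers' equilibrium threshold x̂(y) = −(αy + γμ)/β maximizes the sender's closed-form payoff: Π(x̂(y), y) ≥ Π(x, y) for all x ∈ ℝ, with equality if and only if x = x̂(y). (Benchmark: with no externality, a benevolent sender has no conflict of interests with the receivers, so full information revelation is incentive compatible.) -/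
open MeasureTheory

lemma phi_pos (s m v : ℝ) (hv : 0 < v) : 0 < phi s m v := by
  unfold phi
  have := Real.pi_pos
  positivity

lemma phi_continuous (m v : ℝ) : Continuous (fun s => phi s m v) := by
  unfold phi; fun_prop

lemma phi_integrable (m v : ℝ) (hv : 0 < v) : Integrable (fun s => phi s m v) := by
  have hb : (0:ℝ) < 1/(2*v) := by positivity
  have h : Integrable fun s : ℝ => Real.exp (-(1/(2*v)) * s^2) := integrable_exp_neg_mul_sq hb
  have h3 : Integrable fun s : ℝ => Real.exp (-(1/(2*v)) * (s - m)^2) := h.comp_sub_right m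
  have h2 := h3.const_mul ((2 * Real.pi * v) ^ (-(1:ℝ)/2))
  refine h2.congr (Filter.Eventually.of_forall fun s => ?_)
  show _ = phi s m v
  rw [phi]
  have he : -(1/(2*v)) * (s - m)^2 = -(s - m)^2 / (2*v) := by ring
  simp only [he]

lemma phi_hasDerivAt (m v : ℝ) (hv : 0 < v) (x : ℝ) :
    HasDerivAt (fun s => phi s m v) (-((x - m)/v) * phi x m v) x := by
  have h1 : HasDerivAt (fun s : ℝ => -(s - m)^2 / (2*v)) (-((x-m)/v)) x := by
    have h0 : HasDerivAt (fun s : ℝ => s - m) 1 x := (hasDerivAt_id x).sub_const m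
    have h2 := (h0.pow 2).neg.div_const (2*v)
    refine HasDerivAt.congr_deriv h2 ?_
    field_simp
    ring
  have h3 := (h1.exp).const_mul ((2 * Real.pi * v) ^ (-(1:ℝ)/2))
  refine HasDerivAt.congr_deriv h3 ?_
  unfold phi
  ring

/-- Benchmark: with no externality (`r = 0`), the receivers' equilibrium threshold
`x̂(y) = −(αy + γμ)/β` maximizes the sender's closed-form payoff, with equality
`Π(x, y) = Π(x̂(y), y)` iff `x = x̂(y)`. -/
theorem no_externality_no_conflict (α β γ : ℝ) (hα : 0 < α) (hβ : 0 < β) (hγ : 0 < γ)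
    (μ r y : ℝ) (hr : r = 0) :
    let θb : ℝ := (α*y + γ*μ)/(α + γ)
    let V : ℝ := 1/β + 1/(α + γ)
    let Pay : ℝ → ℝ := fun x => (r + θb) * (1 - Phi x θb V) + (1/(α + γ)) * phi x θb V
    let xhat : ℝ := -(α*y + γ*μ)/β
    ∀ x : ℝ, Pay x ≤ Pay xhat ∧ (Pay x = Pay xhat ↔ x = xhat) := by
  intro θb V Pay xhat x
  have hag : 0 < α + γ := by linarith
  have hV : 0 < V := by
    have : 0 < 1/β + 1/(α + γ) := by positivity
    exact this
  set c : ℝ := 1/((α+γ)*V) with hc_def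
  have hc : 0 < c := by positivity
  -- pointwise identity
  have hkey : ∀ s : ℝ, θb * phi s θb V + (1/(α+γ)) * ((s - θb)/V) * phi s θb V
      = c * ((s - xhat) * phi s θb V) := by
    intro s
    have h : θb + (1/(α+γ)) * ((s - θb)/V) = c * (s - xhat) := by
      show θb + (1/(α+γ)) * ((s - θb)/V) = 1/((α+γ)*V) * (s - xhat)
      show (α*y + γ*μ)/(α + γ) + (1/(α+γ)) * ((s - (α*y + γ*μ)/(α + γ))/(1/β + 1/(α + γ)))
        = 1/((α+γ)*(1/β + 1/(α + γ))) * (s - -(α*y + γ*μ)/β)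
      field_simp
      ring
    calc θb * phi s θb V + (1/(α+γ)) * ((s - θb)/V) * phi s θb V
        = (θb + (1/(α+γ)) * ((s - θb)/V)) * phi s θb V := by ring
      _ = c * ((s - xhat) * phi s θb V) := by rw [h]; ring
  -- integrability facts
  have hint : Integrable (fun s => phi s θb V) := phi_integrable θb V hV
  have hPhi_sub : ∀ a b : ℝ, Phi b θb V - Phi a θb V = ∫ s in a..b, phi s θb V := by
    intro a b
    exact intervalIntegral.integral_Iic_sub_Iic hint.integrableOn hint.integrableOn
  have hderiv_cont : Continuous (fun s => -((s - θb)/V) * phi s θb V) := by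
    have := phi_continuous θb V
    fun_prop
  have hphi_sub : phi xhat θb V - phi x θb V
      = ∫ s in x..xhat, -((s - θb)/V) * phi s θb V := by
    symm
    exact intervalIntegral.integral_eq_sub_of_hasDerivAt
      (fun s _ => phi_hasDerivAt θb V hV s) (hderiv_cont.intervalIntegrable x xhat)
  have hcont2 : Continuous (fun s => ((s - θb)/V) * phi s θb V) := by
    have := phi_continuous θb V; fun_prop
  have hphi_sub' : phi x θb V - phi xhat θb V
      = ∫ s in x..xhat, ((s - θb)/V) * phi s θb V := by
    rw [show phi x θb V - phi xhat θb V = -(phi xhat θb V - phi x θb V) by ring, hphi_sub,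
      ← intervalIntegral.integral_neg]
    exact intervalIntegral.integral_congr fun s _ => by ring
  -- main difference identity
  have hdiff : Pay x - Pay xhat = ∫ s in x..xhat, c * ((s - xhat) * phi s θb V) := by
    have e1 : Pay x - Pay xhat
        = θb * (Phi xhat θb V - Phi x θb V) + (1/(α+γ)) * (phi x θb V - phi xhat θb V) := by
      simp only [Pay, hr]
      ring
    rw [e1, hPhi_sub, hphi_sub', ← intervalIntegral.integral_const_mul,
      ← intervalIntegral.integral_const_mul,
      ← intervalIntegral.integral_add
        (hint.intervalIntegrable.const_mul θb)
        ((hcont2.intervalIntegrable x xhat).const_mul (1/(α+γ)))]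
    refine intervalIntegral.integral_congr fun s _ => ?_
    rw [← hkey s]
    ring
  have hIntc : ∀ a b : ℝ, IntervalIntegrable (fun s => c * ((s - xhat) * phi s θb V)) volume a b := by
    intro a b
    have : Continuous (fun s => c * ((s - xhat) * phi s θb V)) := by
      have := phi_continuous θb V; fun_prop
    exact this.intervalIntegrable a b
  -- sign analysis
  have hneg : x ≠ xhat → Pay x - Pay xhat < 0 := by
    intro hne
    rcases lt_or_gt_of_ne hne with hlt | hgt
    · -- x < xhat : integrand negative on Ioo x xhat
      have hpos : 0 < ∫ s in x..xhat, -(c * ((s - xhat) * phi s θb V)) := by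
        apply intervalIntegral.intervalIntegral_pos_of_pos_on ((hIntc x xhat).neg)
        · intro s hs
          have hphi := phi_pos s θb V hV
          have h1 : s - xhat < 0 := by simp only [Set.mem_Ioo] at hs; linarith [hs.2]
          show 0 < -(c * ((s - xhat) * phi s θb V))
          rw [show -(c * ((s - xhat) * phi s θb V)) = c * ((xhat - s) * phi s θb V) by ring]
          exact mul_pos hc (mul_pos (by linarith) hphi)
        · exact hlt
      rw [intervalIntegral.integral_neg] at hpos
      rw [hdiff]; linarith
    · -- xhat < x
      have hpos : 0 < ∫ s in xhat..x, c * ((s - xhat) * phi s θb V) := by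
        apply intervalIntegral.intervalIntegral_pos_of_pos_on (hIntc xhat x)
        · intro s hs
          have hphi := phi_pos s θb V hV
          have h1 : 0 < s - xhat := by simp only [Set.mem_Ioo] at hs; linarith [hs.1]
          exact mul_pos hc (mul_pos h1 hphi)
        · exact hgt
      rw [hdiff, intervalIntegral.integral_symm]
      linarith
  constructor
  · by_cases h : x = xhat
    · simp [h]
    · linarith [hneg h]
  · constructor
    · intro h
      by_contra hne
      have := hneg hne
      linarith
    · intro h; rw [h]
end
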